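/- arXiv:1307.6693 — 3 statements merged into one kernel-verified Lean document; each statement's English description precedes it below -/
import Mathlib

section
/- For every nonnegative integer p and every real number ℓ, the alternating sum over i from 0 to p of (-1)^i * C(ℓ - i, p) * C(p, i) equals 1. -/
/-!
The sum is the `p`-th backward difference of `x ↦ C(x, p)` at `ℓ`, i.e. the `p`-th forward
difference at `ℓ - p`. Since `C(x, p)` is a polynomial of degree `p` with leading coefficient
`1 / p!`, its `p`-th forward difference is the constant `1`.
-/

/-- Generalized binomial coefficient for a real upper argument. -/
noncomputable def gchoose (x : ℝ) (k : ℕ) : ℝ :=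
  (descPochhammer ℝ k).eval x / k.factorial

open Finset Polynomial
open scoped fwdDiff

theorem fwdDiff_iter_eval_descPochhammer {R : Type*} [CommRing R] [NoZeroDivisors R]
    [Nontrivial R] (n : ℕ) : (Δ_[1])^[n] (descPochhammer R n).eval = n.factorial := by
  simpa [descPochhammer_natDegree, (monic_descPochhammer R n).leadingCoeff] using
    (descPochhammer R n).fwdDiff_iter_degree_eq_factorial

theorem fwdDiff_iter_gchoose (p : ℕ) : (Δ_[1])^[p] (gchoose · p) = 1 := by
  have hsmul : (gchoose · p) = (p.factorial : ℝ)⁻¹ • (descPochhammer ℝ p).eval := by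
    ext x
    simp [gchoose, div_eq_inv_mul]
  rw [hsmul, fwdDiff_iter_const_smul, fwdDiff_iter_eval_descPochhammer]
  ext x
  simp [Nat.factorial_ne_zero]

theorem sum_alternating_choose_smul_sub_eq_fwdDiff_iter {M G : Type*} [AddCommGroup M]
    [AddCommGroup G] (h : M) (f : M → G) (n : ℕ) (y : M) :
    ∑ i ∈ range (n + 1), ((-1 : ℤ) ^ i * n.choose i) • f (y - i • h) =
      (Δ_[h])^[n] f (y - n • h) := by
  rw [fwdDiff_iter_eq_sum_shift, ← sum_range_reflect]
  refine sum_congr rfl fun i hi => ?_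
  have hi : i ≤ n := Nat.lt_succ_iff.mp (mem_range.mp hi)
  rw [Nat.add_sub_cancel, Nat.choose_symm hi, sub_nsmul h hi]
  congr 2
  abel

theorem alternating_sum_eq_one (p : ℕ) (ℓ : ℝ) :
    ∑ i ∈ Finset.range (p + 1),
      (-1 : ℝ) ^ i * gchoose (ℓ - i) p * (p.choose i : ℝ) = 1 := by
  have h := sum_alternating_choose_smul_sub_eq_fwdDiff_iter 1 (gchoose · p) p ℓ
  rw [fwdDiff_iter_gchoose] at h
  simpa [mul_right_comm, zsmul_eq_mul] using h
end

section
/- For every nonnegative integer n and every real number ℓ, the sum over i + j = n of C(2i - ℓ, i) * C(2j + ℓ, j) equals 4^n. -/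
/-!
Write `F n a b = ∑_{i+j=n} C(2i+a, i) C(2j+b, j)`, so that the sum in question is `F n (-ℓ) ℓ`.
Pascal's rule on the second factor (resp. the first) gives
`F (n+1) a (b+1) = F (n+1) a b + F n a (b+2)` (resp. the same with `a` and `b` swapped).
By induction on `n`, if `F n a b` depends only on `a + b`, these two recurrences make
`t ↦ F (n+1) t (c - t)` a `1`-periodic polynomial, hence constant.
So `F n (-ℓ) ℓ = F n 0 0`, and this classical value `4 ^ n` follows from
`F (n+1) 0 0 = 4 F n (-1) 1`, which rests on `C(2m+2, m+1) = 2 C(2m+1, m)`.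
-/

open Finset Polynomial

theorem gchoose_eq_choose (x : ℝ) (k : ℕ) : gchoose x k = Ring.choose x k := by
  rw [gchoose, Ring.choose_eq_smul, smul_eq_mul, descPochhammer_smeval_eq_ascPochhammer,
    ascPochhammer_smeval_cast, ascPochhammer_smeval_eq_eval,
    ← descPochhammer_eval_eq_ascPochhammer, div_eq_inv_mul]

namespace Ring

section BinomialRing

variable {R : Type*} [CommRing R] [BinomialRing R]

theorem choose_symm_half (m : ℕ) :
    choose (2 * m + 1 : R) (m + 1) = choose (2 * m + 1 : R) m := by
  rw [show (2 * m + 1 : R) = (2 * m + 1 : ℕ) by push_cast; rfl, choose_natCast, choose_natCast,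
    Nat.choose_symm_half]

theorem choose_two_mul_add_two (m : ℕ) :
    choose (2 * m + 2 : R) (m + 1) = 2 * choose (2 * m + 1 : R) m := by
  rw [show (2 * m + 2 : R) = 2 * m + 1 + 1 by ring, choose_succ_succ, choose_symm_half, ← two_mul]

theorem two_mul_choose_two_mul_sub_one (i : ℕ) :
    2 * choose (2 * i - 1 : R) i = choose (2 * i : R) i + if i = 0 then 1 else 0 := by
  rcases i with _ | m
  · simp [one_add_one_eq_two]
  · rw [if_neg m.succ_ne_zero, add_zero, Nat.cast_succ,
      show (2 * (m + 1) - 1 : R) = 2 * m + 1 by ring, show (2 * (m + 1) : R) = 2 * m + 2 by ring,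
      choose_two_mul_add_two, choose_symm_half]

end BinomialRing

theorem choose_eq_eval {K : Type*} [Field K] [CharZero K] (x : K) (k : ℕ) :
    choose x k = (C (k.factorial : K)⁻¹ * descPochhammer K k).eval x := by
  rw [choose_eq_smul, smul_eq_mul, descPochhammer_smeval_eq_ascPochhammer,
    ascPochhammer_smeval_cast, ascPochhammer_smeval_eq_eval,
    ← descPochhammer_eval_eq_ascPochhammer, eval_mul, eval_C]

end Ring

theorem Polynomial.eval_eq_of_eval_add_one {R : Type*} [CommRing R] [IsDomain R] [CharZero R]
    {p : R[X]} (hp : ∀ x, p.eval (x + 1) = p.eval x) (x y : R) : p.eval x = p.eval y := by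
  have hshift : ∀ n : ℕ, p.eval (y + n) = p.eval y := by
    intro n
    induction n with
    | zero => simp
    | succ n ih => rw [Nat.cast_succ, ← add_assoc, hp, ih]
  have hconst : p = C (p.eval y) := by
    refine eq_of_infinite_eval_eq _ _ (Set.Infinite.mono ?_ (Set.infinite_range_of_injective
      ((add_right_injective y).comp (Nat.cast_injective (R := R)))))
    rintro _ ⟨n, rfl⟩
    simp [hshift]
  rw [hconst, eval_C, eval_C]

section BinomialRing

variable {R : Type*} [CommRing R] [BinomialRing R]

noncomputable def centralBinomConv (n : ℕ) (a b : R) : R :=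
  ∑ ij ∈ antidiagonal n, Ring.choose (2 * ij.1 + a) ij.1 * Ring.choose (2 * ij.2 + b) ij.2

theorem centralBinomConv_comm (n : ℕ) (a b : R) :
    centralBinomConv n a b = centralBinomConv n b a := by
  rw [centralBinomConv, ← Nat.sum_antidiagonal_swap]
  simp only [Prod.fst_swap, Prod.snd_swap, mul_comm, centralBinomConv]

theorem centralBinomConv_succ_add_one_right (n : ℕ) (a b : R) :
    centralBinomConv (n + 1) a (b + 1) =
      centralBinomConv (n + 1) a b + centralBinomConv n a (b + 2) := by
  have hpascal : ∀ j : ℕ, Ring.choose (2 * (j + 1 : ℕ) + (b + 1)) (j + 1) =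
      Ring.choose (2 * j + (b + 2)) j + Ring.choose (2 * (j + 1 : ℕ) + b) (j + 1) := by
    intro j
    rw [show (2 * (j + 1 : ℕ) + (b + 1) : R) = 2 * (j + 1 : ℕ) + b + 1 by ring,
      Ring.choose_succ_succ, show (2 * (j + 1 : ℕ) + b : R) = 2 * j + (b + 2) by push_cast; ring]
  simp only [centralBinomConv, Nat.sum_antidiagonal_succ', hpascal, mul_add, sum_add_distrib,
    Nat.cast_zero, mul_zero, zero_add, Ring.choose_zero_right]
  ring

theorem centralBinomConv_succ_add_one_left (n : ℕ) (a b : R) :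
    centralBinomConv (n + 1) (a + 1) b =
      centralBinomConv (n + 1) a b + centralBinomConv n (a + 2) b := by
  simp only [centralBinomConv_comm _ _ b, centralBinomConv_succ_add_one_right]

theorem centralBinomConv_succ_add_one_left_eq_right {n : ℕ}
    (hn : ∀ a b : R, centralBinomConv n a b = centralBinomConv n 0 (a + b)) (a b : R) :
    centralBinomConv (n + 1) (a + 1) b = centralBinomConv (n + 1) a (b + 1) := by
  rw [centralBinomConv_succ_add_one_left, centralBinomConv_succ_add_one_right, hn (a + 2), hn a]
  congr 2
  ring

theorem centralBinomConv_succ_zero_zero (n : ℕ) :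
    centralBinomConv (n + 1) (0 : R) 0 = 4 * centralBinomConv n (-1) 1 := by
  set g : ℕ → R := fun j => Ring.choose (2 * (j + 1 : ℕ)) (j + 1)
  have hterm : ∀ i j : ℕ, 4 * (Ring.choose (2 * i + -1 : R) i * Ring.choose (2 * j + 1 : R) j) =
      Ring.choose (2 * i : R) i * g j + if i = 0 then g j else 0 := by
    intro i j
    calc _ = 2 * Ring.choose (2 * i - 1 : R) i * (2 * Ring.choose (2 * j + 1 : R) j) := by
          rw [← sub_eq_add_neg]; ring
      _ = (Ring.choose (2 * i : R) i + if i = 0 then 1 else 0) * g j := by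
          rw [Ring.two_mul_choose_two_mul_sub_one, ← Ring.choose_two_mul_add_two]
          push_cast [g]
          ring_nf
      _ = _ := by split_ifs <;> simp [add_mul]
  have hcorner : ∑ ij ∈ antidiagonal n, (if ij.1 = 0 then g ij.2 else 0) = g n := by
    rw [Nat.sum_antidiagonal_eq_sum_range_succ_mk, sum_ite_eq']
    simp
  simp only [centralBinomConv, add_zero, mul_sum, hterm, sum_add_distrib, hcorner,
    Nat.sum_antidiagonal_succ']
  simp [g, add_comm]

end BinomialRing

section Field

variable {K : Type*} [Field K] [CharZero K]

theorem exists_eval_eq_centralBinomConv (n : ℕ) (c : K) :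
    ∃ p : K[X], ∀ t, p.eval t = centralBinomConv n t (c - t) := by
  refine ⟨∑ ij ∈ antidiagonal n,
    (C (ij.1.factorial : K)⁻¹ * descPochhammer K ij.1).comp (C (2 * ij.1 : K) + X) *
    (C (ij.2.factorial : K)⁻¹ * descPochhammer K ij.2).comp (C (2 * ij.2 + c : K) - X), fun t => ?_⟩
  simp only [centralBinomConv, Ring.choose_eq_eval, eval_finsetSum, eval_mul, eval_comp,
    eval_add, eval_sub, eval_C, eval_X, add_sub_assoc]

theorem centralBinomConv_eq_zero_add (n : ℕ) (a b : K) :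
    centralBinomConv n a b = centralBinomConv n 0 (a + b) := by
  induction n generalizing a b with
  | zero => simp [centralBinomConv]
  | succ n ih =>
    obtain ⟨p, hp⟩ := exists_eval_eq_centralBinomConv (n + 1) (a + b)
    have hperiodic : ∀ t, p.eval (t + 1) = p.eval t := by
      intro t
      rw [hp, hp, centralBinomConv_succ_add_one_left_eq_right ih, sub_add_eq_sub_sub,
        sub_add_cancel]
    simpa [hp] using eval_eq_of_eval_add_one hperiodic a 0

theorem centralBinomConv_zero_zero (n : ℕ) : centralBinomConv n (0 : K) 0 = 4 ^ n := by
  induction n with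
  | zero => simp [centralBinomConv]
  | succ n ih =>
    rw [centralBinomConv_succ_zero_zero, centralBinomConv_eq_zero_add n, neg_add_cancel, ih,
      pow_succ, mul_comm]

end Field

theorem generalized_convolution (n : ℕ) (ℓ : ℝ) :
    ∑ ij ∈ Finset.HasAntidiagonal.antidiagonal n,
      gchoose (2 * ij.1 - ℓ) ij.1 * gchoose (2 * ij.2 + ℓ) ij.2 = 4 ^ n := by
  simp only [gchoose_eq_choose, sub_eq_add_neg]
  rw [← centralBinomConv, centralBinomConv_eq_zero_add, neg_add_cancel, centralBinomConv_zero_zero]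
end

section
/- For every nonnegative integer n and every integer ℓ with 0 ≤ ℓ and ℓ even, the sum over i + j = n of C(2i - ℓ, i) * C(2j + ℓ, j) equals 4^n, where the binomial coefficients are interpreted over the integers via the generalized binomial coefficient. -/
/-!
Write `F(a, b, n) = ∑_{i+j=n} C(2i+a, i) C(2j+b, j)`. Pascal's rule in either factor gives
`F(a+1, b, n+1) = F(a+2, b, n) + F(a, b, n+1)` and `F(a, b+1, n+1) = F(a, b+2, n) + F(a, b, n+1)`,
so by induction on `n` the sum depends only on `a + b`. For `a + b = 0` compare `F(0, 0, n+1)` with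
`4 F(1, -1, n)`: termwise, `2 C(2i+1, i) = C(2i+2, i+1)` and `2 C(2j-1, j) = C(2j, j)` for `j ≥ 1`,
and the excess at `j = 0` (where `C(-1, 0) = 1`) is exactly the missing term `i = 0` of `F(0, 0, n+1)`.
Hence `F(0, 0, n+1) = 4 F(0, 0, n)`.
-/

open Finset

theorem Nat.two_mul_choose_two_mul_add_one (n : ℕ) :
    2 * (2 * n + 1).choose n = centralBinom (n + 1) := by
  rw [centralBinom_eq_two_mul_choose, Nat.mul_succ, Nat.choose_succ_succ, choose_symm_half]
  ring

theorem Ring.choose_two_mul_natCast (n : ℕ) :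
    Ring.choose (2 * (n : ℤ)) n = n.centralBinom := by
  exact_mod_cast Ring.choose_natCast (R := ℤ) (2 * n) n

theorem Ring.two_mul_choose_two_mul_add_one (n : ℕ) :
    2 * Ring.choose (2 * (n : ℤ) + 1) n = (n + 1).centralBinom := by
  rw [← Nat.two_mul_choose_two_mul_add_one]
  exact_mod_cast congrArg (2 * ·) (Ring.choose_natCast (R := ℤ) (2 * n + 1) n)

theorem Ring.two_mul_choose_two_mul_sub_one_s13 (n : ℕ) :
    2 * Ring.choose (2 * (n : ℤ) - 1) n = n.centralBinom + if n = 0 then 1 else 0 := by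
  rcases n with _ | n
  · simp
  · have h : 2 * ((n + 1 : ℕ) : ℤ) - 1 = ((2 * n + 1 : ℕ) : ℤ) := by push_cast; ring
    rw [h, Ring.choose_natCast, ← Nat.two_mul_choose_two_mul_add_one, ← Nat.choose_symm_half]
    simp

def centralConv (a b : ℤ) (n : ℕ) : ℤ :=
  ∑ p ∈ antidiagonal n, Ring.choose (2 * (p.1 : ℤ) + a) p.1 * Ring.choose (2 * (p.2 : ℤ) + b) p.2

theorem centralConv_zero (a b : ℤ) : centralConv a b 0 = 1 := by
  simp [centralConv]

theorem centralConv_comm (a b : ℤ) (n : ℕ) : centralConv a b n = centralConv b a n := by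
  rw [centralConv, ← Nat.sum_antidiagonal_swap, centralConv]
  simp only [Prod.fst_swap, Prod.snd_swap, mul_comm]

theorem centralConv_add_one_right_succ (a b : ℤ) (n : ℕ) :
    centralConv a (b + 1) (n + 1) = centralConv a (b + 2) n + centralConv a b (n + 1) := by
  rw [centralConv, Nat.sum_antidiagonal_succ', centralConv, centralConv, Nat.sum_antidiagonal_succ']
  simp only [Nat.cast_zero, mul_zero, zero_add, Ring.choose_zero_right]
  rw [add_left_comm, ← sum_add_distrib]
  congr 1
  refine sum_congr rfl fun p _ => ?_
  have hpascal : 2 * ((p.2 + 1 : ℕ) : ℤ) + (b + 1) = 2 * p.2 + (b + 2) + 1 := by push_cast; ring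
  have hshift : 2 * ((p.2 + 1 : ℕ) : ℤ) + b = 2 * p.2 + (b + 2) := by push_cast; ring
  rw [hpascal, hshift, Ring.choose_succ_succ, mul_add]

theorem centralConv_add_one_left_succ (a b : ℤ) (n : ℕ) :
    centralConv (a + 1) b (n + 1) = centralConv (a + 2) b n + centralConv a b (n + 1) := by
  simp only [centralConv_comm _ b, centralConv_add_one_right_succ]

theorem centralConv_add_one_left (a b : ℤ) (n : ℕ) :
    centralConv (a + 1) b n = centralConv a (b + 1) n := by
  induction n generalizing a b with
  | zero => simp only [centralConv_zero]
  | succ n ih =>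
    rw [centralConv_add_one_left_succ, centralConv_add_one_right_succ, ← one_add_one_eq_two,
      ← add_assoc, ← add_assoc, ih, ih]

theorem centralConv_eq_zero_add (a b : ℤ) (n : ℕ) : centralConv a b n = centralConv 0 (a + b) n := by
  induction a using Int.induction_on generalizing b with
  | zero => rw [zero_add]
  | succ a ih => rw [centralConv_add_one_left, ih, add_right_comm, add_assoc]
  | pred a ih =>
    rw [← sub_add_cancel b 1, ← centralConv_add_one_left, sub_add_cancel, ih]
    ring_nf

theorem centralConv_zero_zero_succ (n : ℕ) :
    centralConv 0 0 (n + 1) = 4 * centralConv 1 (-1) n := by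
  have hdouble : ∀ p ∈ antidiagonal n,
      4 * (Ring.choose (2 * (p.1 : ℤ) + 1) p.1 * Ring.choose (2 * (p.2 : ℤ) + -1) p.2) =
        (p.1 + 1).centralBinom * (p.2.centralBinom + if p.2 = 0 then 1 else 0) := by
    intro p _
    rw [← sub_eq_add_neg, ← Ring.two_mul_choose_two_mul_add_one,
      ← Ring.two_mul_choose_two_mul_sub_one_s13]
    ring
  have hcorner : ∑ p ∈ antidiagonal n,
      ((p.1 + 1).centralBinom : ℤ) * (if p.2 = 0 then 1 else 0) = (n + 1).centralBinom := by
    rw [sum_eq_single (n, 0)]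
    · simp
    · intro p hp hne
      have : p.2 ≠ 0 := fun h => hne (Prod.ext (by simpa [h] using hp) h)
      simp [this]
    · simp
  rw [centralConv, centralConv, Nat.sum_antidiagonal_succ, mul_sum, sum_congr rfl hdouble]
  simp only [add_zero, Ring.choose_two_mul_natCast, mul_add, sum_add_distrib, hcorner]
  simp [add_comm]

theorem centralConv_zero_zero (n : ℕ) : centralConv 0 0 n = 4 ^ n := by
  induction n with
  | zero => exact centralConv_zero 0 0
  | succ n ih =>
    rw [centralConv_zero_zero_succ, pow_succ', ← ih, centralConv_eq_zero_add]
    norm_num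

theorem generalized_convolution_int_general (n : ℕ) (ℓ : ℤ) :
    ∑ ij ∈ Finset.HasAntidiagonal.antidiagonal n,
      Ring.choose (2 * (ij.1 : ℤ) - ℓ) ij.1 * Ring.choose (2 * (ij.2 : ℤ) + ℓ) ij.2
      = 4 ^ n := by
  calc _ = centralConv (-ℓ) ℓ n := by simp only [centralConv, sub_eq_add_neg]
    _ = centralConv 0 0 n := by rw [centralConv_eq_zero_add, neg_add_cancel]
    _ = 4 ^ n := centralConv_zero_zero n

theorem generalized_convolution_int (n : ℕ) (ℓ : ℤ) (hℓ : 0 ≤ ℓ) (he : Even ℓ) :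
    ∑ ij ∈ Finset.HasAntidiagonal.antidiagonal n,
      Ring.choose (2 * (ij.1 : ℤ) - ℓ) ij.1 * Ring.choose (2 * (ij.2 : ℤ) + ℓ) ij.2
      = 4 ^ n :=
  generalized_convolution_int_general n ℓ
end
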